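/- (Corollary 3.2, Claim 2: non-occurrence of the Lavrentiev phenomenon for the two end point problem.) Assume Λ satisfies Condition (S), that Λ is real valued (Λ < +∞ everywhere), and that for every K > 0: Ψ is bounded on I×B_K; for every z ∈ B_K the map s ↦ Ψ(s,z) is continuous on I; there is m_{K,Ψ} > 0 such that Ψ(s,z) ≥ m_{K,Ψ} for all s ∈ I, z ∈ B_K; and for every r > 0, Λ is bounded on I×B_K×B_r. Then for every X, Y ∈ ℝⁿ, inf{ F(y) : y ∈ W^{1,p}(I;ℝⁿ), y(t)=X, y(T)=Y } = inf{ F(y) : y Lipschitz I → ℝⁿ, y(t)=X, y(T)=Y }. -/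

import Mathlib

open MeasureTheory Set Filter ENNReal NNReal Metric

noncomputable section

/-- Euclidean space `ℝⁿ`. -/
abbrev EN (n : ℕ) := EuclideanSpace ℝ (Fin n)

/-- `y` belongs to `W^{1,p}([t,T];ℝⁿ)` with derivative `y'`: it is absolutely continuous,
given by the integral of `y'`, and both `y` and `y'` are in `L^p` on `[t,T]`. -/
def MemW1p {n : ℕ} (t T p : ℝ) (y y' : ℝ → EN n) : Prop :=
  IntervalIntegrable y' volume t T ∧
  (∀ x ∈ Set.Icc t T, y x = y t + ∫ s in t..x, y' s) ∧
  MemLp y (ENNReal.ofReal p) (volume.restrict (Set.Icc t T)) ∧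
  MemLp y' (ENNReal.ofReal p) (volume.restrict (Set.Icc t T))

/-- The functional `F(y) = ∫_t^T Λ(s,y(s),y'(s)) Ψ(s,y(s)) ds`. -/
def Func {n : ℕ} (t T : ℝ) (Λ : ℝ → EN n → EN n → ℝ≥0∞) (Ψ : ℝ → EN n → ℝ≥0∞)
    (y y' : ℝ → EN n) : ℝ≥0∞ :=
  ∫⁻ s in Set.Icc t T, Λ s (y s) (y' s) * Ψ s (y s)

/-- Condition (S): a local Lipschitz-type condition on the time variable of `Λ`. -/
def ConditionS {n : ℕ} (t T p : ℝ) (Λ : ℝ → EN n → EN n → ℝ≥0∞) : Prop :=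
  ∀ K : ℝ, 0 ≤ K → ∃ κ β : ℝ, 0 ≤ κ ∧ 0 ≤ β ∧ ∃ γ : ℝ → ℝ,
    IntegrableOn γ (Set.Icc t T) volume ∧ ∃ ε : ℝ, 0 < ε ∧
      ∀ᵐ s ∂(volume.restrict (Set.Icc t T)),
        ∀ s₁ ∈ Set.Icc (s - ε) (s + ε) ∩ Set.Icc t T,
        ∀ s₂ ∈ Set.Icc (s - ε) (s + ε) ∩ Set.Icc t T,
        ∀ z ∈ Metric.closedBall (0 : EN n) K, ∀ v : EN n,
          Λ s z v < ⊤ →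
          (Λ s₂ z v - Λ s₁ z v) ⊔ (Λ s₁ z v - Λ s₂ z v) ≤
            (ENNReal.ofReal κ * Λ s z v + ENNReal.ofReal (β * ‖v‖ ^ p + γ s)) *
              ENNReal.ofReal |s₂ - s₁|

/-!
Let `y ∈ W^{1,p}` have finite energy and let `g` be a measurable representative of `y'`. We change
time so that the curve becomes Lipschitz. On `B_k = {‖g‖ > R + k}` the clock runs at speed `‖g‖`,
which makes the new velocity a unit vector; the time `Δ_k = ∫_{B_k} (‖g‖ - 1)` gained there is
given back by running at half speed on a set `G_k ⊆ {‖g‖ ≤ R}` of measure `2 Δ_k`. The time change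
`τ_k` fixes `t` and `T`, moves every point by at most `Δ_k → 0`, and turns the energy of the new
curve into `∫ w_k(s) L(τ_k s, y s, g s / w_k s) ds`, where `w_k` is the speed. On `B_k ∪ G_k` the
integrand is bounded through the bounds on `Λ` and `Ψ` over bounded velocities, and these sets
carry vanishing weight; elsewhere only the time variable moves, which Condition (S) controls for
`Λ`, while the continuity of `Ψ` in time and dominated convergence control `Ψ`. Hence
`F(y_k) ≤ F(y) + o(1)`.
-/

open scoped Topology

theorem exists_subset_volume_eq {a b m : ℝ} {S : Set ℝ} (hab : a ≤ b) (hS : MeasurableSet S)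
    (hSab : S ⊆ Icc a b) (hm : 0 ≤ m) (hmS : ENNReal.ofReal m ≤ volume S) :
    ∃ G ⊆ S, MeasurableSet G ∧ volume G = ENNReal.ofReal m := by
  have hfin : ∀ u, volume (S ∩ Iic u) ≠ ⊤ := fun u =>
    ((measure_mono (inter_subset_left.trans hSab)).trans_lt measure_Icc_lt_top).ne
  set f : ℝ → ℝ := fun u => volume.real (S ∩ Iic u)
  have hf : ∀ u v, u ≤ v → f u ≤ f v ∧ f v ≤ f u + (v - u) := by
    refine fun u v huv => ⟨measureReal_mono (inter_subset_inter_right _ (Iic_subset_Iic.2 huv))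
      (hfin v), ?_⟩
    have hsub : S ∩ Iic v ⊆ (S ∩ Iic u) ∪ Ioc u v := fun x ⟨hxS, hxv⟩ =>
      (le_or_gt x u).imp (fun h => ⟨hxS, h⟩) (fun h => ⟨h, hxv⟩)
    calc f v ≤ volume.real ((S ∩ Iic u) ∪ Ioc u v) :=
          measureReal_mono hsub (measure_union_ne_top (hfin u) measure_Ioc_lt_top.ne)
      _ ≤ f u + (v - u) := by
          grw [measureReal_union_le, Real.volume_real_Ioc_of_le huv]
  have hcont : Continuous f := by
    refine (LipschitzWith.of_le_add_mul 1 fun u v => ?_).continuous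
    rw [NNReal.coe_one, one_mul, Real.dist_eq]
    rcases le_total u v with h | h
    · linarith [(hf u v h).1, abs_nonneg (u - v)]
    · linarith [(hf v u h).2, le_abs_self (u - v)]
  have hfa : f a = 0 := by
    have : volume (S ∩ Iic a) = 0 := measure_mono_null (fun x ⟨hxS, hxa⟩ =>
      le_antisymm hxa (hSab hxS).1) (measure_singleton a)
    simp [f, measureReal_def, this]
  have hfb : m ≤ f b := by
    have : S ∩ Iic b = S := inter_eq_left.2 fun x hx => (hSab hx).2
    simp only [f, measureReal_def, this]
    exact (ENNReal.ofReal_le_iff_le_toReal (this ▸ hfin b)).1 hmS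
  obtain ⟨u, -, hu⟩ := intermediate_value_Icc hab hcont.continuousOn ⟨hfa ▸ hm, hfb⟩
  exact ⟨S ∩ Iic u, inter_subset_left, hS.inter measurableSet_Iic,
    by rw [← hu, ofReal_measureReal (hfin u)]⟩

theorem exists_volume_inter_norm_le_pos {F : Type*} [Norm F] {t T : ℝ} (ht : t < T)
    (g : ℝ → F) : ∃ R : ℝ, 1 ≤ R ∧ 0 < volume (Icc t T ∩ {s | ‖g s‖ ≤ R}) := by
  have hcover : (⋃ N : ℕ, Icc t T ∩ {s | ‖g s‖ ≤ N + 1}) = Icc t T := by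
    refine (iUnion_subset fun _ => inter_subset_left).antisymm fun s hs => ?_
    obtain ⟨N, hN⟩ := exists_nat_ge ‖g s‖
    exact mem_iUnion.2 ⟨N, hs, show ‖g s‖ ≤ N + 1 by linarith⟩
  obtain ⟨N, hN⟩ := exists_measure_pos_of_not_measure_iUnion_null
    (hcover ▸ (Real.volume_Icc ▸ ENNReal.ofReal_pos.2 (sub_pos.2 ht)).ne')
  exact ⟨N + 1, by linarith [N.cast_nonneg (α := ℝ)], hN⟩

theorem tendsto_setIntegral_inter_lt {F : Type*} [NormedAddCommGroup F] [NormedSpace ℝ F]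
    {S : Set ℝ} {f : ℝ → ℝ} {φ : ℝ → F} (hS : MeasurableSet S) (hf : Measurable f)
    (hφ : IntegrableOn φ S) (R : ℝ) :
    Tendsto (fun k : ℕ => ∫ s in S ∩ {s | R + k < f s}, φ s) atTop (𝓝 0) := by
  have hanti : Antitone fun k : ℕ => S ∩ {s | R + k < f s} := fun k l hkl s hs =>
    ⟨hs.1, (add_le_add_right (Nat.cast_le.2 hkl) R).trans_lt hs.2⟩
  have hempty : (⋂ k : ℕ, S ∩ {s | R + k < f s}) = ∅ := by
    refine eq_empty_of_forall_notMem fun s hs => ?_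
    obtain ⟨k, hk⟩ := exists_nat_ge (f s - R)
    have hk' : R + k < f s := (mem_iInter.1 hs k).2
    linarith
  simpa [hempty] using tendsto_setIntegral_of_antitone
    (fun k => hS.inter (measurableSet_lt measurable_const hf)) hanti
    ⟨0, hφ.mono_set inter_subset_left⟩

theorem intervalIntegral_mem_Icc_integral {f : ℝ → ℝ} {t x : ℝ} (hf : Integrable f)
    (hf0 : ∀ s, 0 ≤ f s) (hx : t ≤ x) : ∫ s in t..x, f s ∈ Icc 0 (∫ s, f s) := by
  rw [intervalIntegral.integral_of_le hx]
  exact ⟨setIntegral_nonneg measurableSet_Ioc fun s _ => hf0 s,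
    setIntegral_le_integral hf (ae_of_all _ hf0)⟩

theorem intervalIntegral_eq_integral_of_support_subset {F : Type*} [NormedAddCommGroup F]
    [NormedSpace ℝ F] {f : ℝ → F} {t T : ℝ} (htT : t ≤ T) (hf : ∀ s ∉ Icc t T, f s = 0) :
    ∫ s in t..T, f s = ∫ s, f s := by
  rw [intervalIntegral.integral_of_le htT, ← integral_Icc_eq_integral_Ioc,
    setIntegral_eq_integral_of_forall_compl_eq_zero hf]

theorem intervalIntegrable_of_norm_le {F : Type*} [NormedAddCommGroup F] {v : ℝ → F} {r : ℝ}
    (hv : AEStronglyMeasurable v volume) (hvr : ∀ u, ‖v u‖ ≤ r) (a b : ℝ) :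
    IntervalIntegrable v volume a b :=
  intervalIntegrable_const.mono_fun' hv.restrict (ae_of_all _ hvr)

theorem lipschitzWith_primitive {F : Type*} [NormedAddCommGroup F] [NormedSpace ℝ F]
    {v : ℝ → F} {r : ℝ≥0} (hv : AEStronglyMeasurable v volume) (hvr : ∀ u, ‖v u‖ ≤ r)
    (a : ℝ) (x₀ : F) : LipschitzWith r fun u => x₀ + ∫ s in a..u, v s := by
  refine LipschitzWith.of_dist_le_mul fun u u' => ?_
  rw [dist_eq_norm, add_sub_add_left_eq_sub, intervalIntegral.integral_interval_sub_left
    (intervalIntegrable_of_norm_le hv hvr a u) (intervalIntegrable_of_norm_le hv hvr a u'),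
    Real.dist_eq]
  exact intervalIntegral.norm_integral_le_of_norm_le_const fun s _ => hvr s

/-! ### Time changes -/

theorem exists_orderIso_sub_eq_integral {w : ℝ → ℝ} {c : ℝ} (hc : 0 < c) (hw : ∀ x, c ≤ w x)
    (hwi : ∀ a b, IntervalIntegrable w volume a b) (a : ℝ) :
    ∃ e : ℝ ≃o ℝ, e a = a ∧ ∀ x y, e y - e x = ∫ s in x..y, w s := by
  set τ : ℝ → ℝ := fun x => a + ∫ s in a..x, w s
  have hτ : ∀ x y, τ y - τ x = ∫ s in x..y, w s := fun x y => by
    simp only [τ]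
    rw [← intervalIntegral.integral_add_adjacent_intervals (hwi a x) (hwi x y)]; ring
  have hτc : ∀ x y, x ≤ y → c * (y - x) ≤ τ y - τ x := fun x y hxy => by
    simpa [hτ, mul_comm] using
      intervalIntegral.integral_mono_on hxy intervalIntegrable_const (hwi x y) fun s _ => hw s
  have hmono : StrictMono τ := fun x y hxy => by nlinarith [hτc x y hxy.le]
  have hcont : Continuous τ := continuous_const.add (intervalIntegral.continuous_primitive hwi a)
  have htop : Tendsto τ atTop atTop := by
    refine tendsto_atTop_mono' _ ?_ (tendsto_atTop_add_const_left _ (τ 0)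
      (tendsto_id.const_mul_atTop hc))
    filter_upwards [eventually_ge_atTop 0] with x hx
    have := hτc 0 x hx
    simp only [id]
    linarith
  have hbot : Tendsto τ atBot atBot := by
    refine tendsto_atBot_mono' _ ?_ (tendsto_atBot_add_const_left _ (τ 0)
      (tendsto_id.const_mul_atBot hc))
    filter_upwards [eventually_le_atBot 0] with x hx
    have := hτc x 0 hx
    simp only [id]
    linarith
  exact ⟨hmono.orderIsoOfSurjective τ (hcont.surjective htop hbot), by simp [τ], hτ⟩

section ChangeOfVariables

variable {w : ℝ → ℝ} {e : ℝ ≃o ℝ}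

theorem map_withDensity_eq_volume (hw : ∀ x, 0 ≤ w x)
    (hwi : ∀ a b, IntervalIntegrable w volume a b) (he : ∀ x y, e y - e x = ∫ s in x..y, w s) :
    Measure.map e (volume.withDensity fun s => ENNReal.ofReal (w s)) = volume := by
  refine (Measure.ext_of_Ioc volume _ fun a b hab => ?_).symm
  have hle : e.symm a ≤ e.symm b := e.symm.monotone hab.le
  rw [Measure.map_apply e.monotone.measurable measurableSet_Ioc, e.preimage_Ioc,
    withDensity_apply _ measurableSet_Ioc, ← ofReal_integral_eq_lintegral_ofReal
      ((intervalIntegrable_iff_integrableOn_Ioc_of_le hle).1 (hwi _ _)) (ae_of_all _ hw),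
    ← intervalIntegral.integral_of_le hle, ← he, e.apply_symm_apply, e.apply_symm_apply,
    Real.volume_Ioc]

theorem setLIntegral_comp_orderIso (hwm : Measurable w) (hw : ∀ x, 0 ≤ w x)
    (hwi : ∀ a b, IntervalIntegrable w volume a b) (he : ∀ x y, e y - e x = ∫ s in x..y, w s)
    (f : ℝ → ℝ≥0∞) {s : Set ℝ} (hs : MeasurableSet s) :
    ∫⁻ x in e ⁻¹' s, ENNReal.ofReal (w x) * f (e x) = ∫⁻ u in s, f u := by
  let E : ℝ ≃ᵐ ℝ := e.toHomeomorph.toMeasurableEquiv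
  have hE : Measure.map E (volume.withDensity fun x => ENNReal.ofReal (w x)) = volume :=
    map_withDensity_eq_volume hw hwi he
  calc ∫⁻ x in e ⁻¹' s, ENNReal.ofReal (w x) * f (e x)
      = ∫⁻ x in E ⁻¹' s, f (E x) ∂volume.withDensity fun x => ENNReal.ofReal (w x) := by
        rw [restrict_withDensity (E.measurable hs),
          lintegral_withDensity_eq_lintegral_mul_non_measurable _ hwm.ennreal_ofReal
            (ae_of_all _ fun _ => ofReal_lt_top)]
        rfl
    _ = ∫⁻ u in s, f u := by
        rw [← lintegral_map_equiv, ← E.restrict_map, hE]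

theorem setIntegral_comp_orderIso {F : Type*} [NormedAddCommGroup F] [NormedSpace ℝ F]
    (hwm : Measurable w) (hw : ∀ x, 0 ≤ w x) (hwi : ∀ a b, IntervalIntegrable w volume a b)
    (he : ∀ x y, e y - e x = ∫ s in x..y, w s) (f : ℝ → F) {s : Set ℝ} (hs : MeasurableSet s) :
    ∫ x in e ⁻¹' s, w x • f (e x) = ∫ u in s, f u := by
  let E : ℝ ≃ᵐ ℝ := e.toHomeomorph.toMeasurableEquiv
  have hE : Measure.map E (volume.withDensity fun x => ENNReal.ofReal (w x)) = volume :=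
    map_withDensity_eq_volume hw hwi he
  calc ∫ x in e ⁻¹' s, w x • f (e x)
      = ∫ x in E ⁻¹' s, f (E x) ∂volume.withDensity fun x => ENNReal.ofReal (w x) := by
        rw [restrict_withDensity (E.measurable hs)]
        erw [integral_withDensity_eq_integral_smul hwm.real_toNNReal]
        refine integral_congr_ae (ae_of_all _ fun x => ?_)
        simp [NNReal.smul_def, Real.coe_toNNReal _ (hw x), E]
    _ = ∫ u in s, f u := by
        rw [← integral_map_equiv, ← E.restrict_map, hE]

end ChangeOfVariables

namespace MemW1p

variable {n : ℕ} {t T p : ℝ} {y y' g : ℝ → EN n}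

theorem congr_ae (hy : MemW1p t T p y y') (htT : t ≤ T)
    (hg : y' =ᵐ[volume.restrict (Icc t T)] g) : MemW1p t T p y g := by
  obtain ⟨hy'i, hyy', hyp, hy'p⟩ := hy
  have hsub : ∀ x ∈ Icc t T, y' =ᵐ[volume.restrict (uIoc t x)] g := fun x hx => by
    refine ae_restrict_of_ae_restrict_of_subset (fun s hs => ?_) hg
    rw [uIoc_of_le hx.1] at hs
    exact ⟨hs.1.le, hs.2.trans hx.2⟩
  refine ⟨intervalIntegrable_iff.2 ((intervalIntegrable_iff.1 hy'i).congr_fun_ae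
    (hsub T (right_mem_Icc.2 htT))), fun x hx => ?_, hyp, (memLp_congr_ae hg).1 hy'p⟩
  rw [hyy' x hx, intervalIntegral.integral_congr_ae_restrict (hsub x hx)]

theorem continuousOn (hy : MemW1p t T p y y') (htT : t ≤ T) : ContinuousOn y (Icc t T) := by
  have h := intervalIntegral.continuousOn_primitive_interval (a := t) (b := T)
    ((intervalIntegrable_iff' (μ := volume)).1 hy.1)
  rw [uIcc_of_le htT] at h
  exact (continuousOn_const.add h).congr hy.2.1

end MemW1p

theorem memW1p_primitive {n : ℕ} {t T p : ℝ} {v : ℝ → EN n} {r : ℝ≥0}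
    (hv : AEStronglyMeasurable v volume) (hvr : ∀ u, ‖v u‖ ≤ r) (x₀ : EN n) :
    MemW1p t T p (fun u => x₀ + ∫ s in t..u, v s) v := by
  have hlip := lipschitzWith_primitive hv hvr t x₀
  obtain ⟨C, hC⟩ := (isCompact_Icc (a := t) (b := T)).exists_bound_of_continuousOn
    hlip.continuous.continuousOn
  refine ⟨intervalIntegrable_of_norm_le hv hvr t T, fun _ _ => by simp, ?_,
    MemLp.of_bound hv.restrict r (ae_of_all _ hvr)⟩
  exact MemLp.of_bound hlip.continuous.aestronglyMeasurable
    C ((ae_restrict_iff' measurableSet_Icc).2 (ae_of_all _ hC))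

theorem exists_lipschitz_reparametrization {n : ℕ} {t T p : ℝ} {Λ : ℝ → EN n → EN n → ℝ≥0∞}
    {Ψ : ℝ → EN n → ℝ≥0∞} {y g : ℝ → EN n} {w : ℝ → ℝ} {e : ℝ ≃o ℝ} {r : ℝ≥0} (htT : t ≤ T)
    (hy : ∀ x ∈ Icc t T, y x = y t + ∫ s in t..x, g s) (hg : Measurable g)
    (hwm : Measurable w) (hw : ∀ x, 0 < w x) (hwi : ∀ a b, IntervalIntegrable w volume a b)
    (he : ∀ x y, e y - e x = ∫ s in x..y, w s) (het : e t = t) (heT : e T = T)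
    (hgw : ∀ s ∈ Icc t T, ‖g s‖ ≤ r * w s) :
    ∃ z z' : ℝ → EN n, MemW1p t T p z z' ∧ LipschitzWith r z ∧ z t = y t ∧ z T = y T ∧
      Func t T Λ Ψ z z' = ∫⁻ s in Icc t T,
        ENNReal.ofReal (w s) * (Λ (e s) (y s) ((w s)⁻¹ • g s) * Ψ (e s) (y s)) := by
  have hw0 : ∀ x, 0 ≤ w x := fun x => (hw x).le
  have hφt : e.symm t = t := e.symm_apply_eq.2 het.symm
  have hpre : e ⁻¹' Icc t T = Icc t T := by
    rw [e.preimage_Icc, hφt, e.symm_apply_eq.2 heT.symm]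
  have heI : ∀ s ∈ Icc t T, e s ∈ Icc t T := fun s hs => by rwa [← hpre] at hs
  have hφm : Measurable e.symm := e.symm.monotone.measurable
  set v : ℝ → EN n := (Icc t T).indicator fun u => (w (e.symm u))⁻¹ • g (e.symm u)
  have hv_e : ∀ s ∈ Icc t T, v (e s) = (w s)⁻¹ • g s := fun s hs => by
    simp only [v]
    rw [indicator_of_mem (heI s hs), e.symm_apply_apply]
  have hvm : Measurable v :=
    (((hwm.comp hφm).inv).smul (hg.comp hφm)).indicator measurableSet_Icc
  have hvr : ∀ u, ‖v u‖ ≤ r := fun u => by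
    by_cases hu : u ∈ Icc t T
    · have hφu : e.symm u ∈ Icc t T := by rw [← hpre]; simpa using hu
      simp only [v]
      rw [indicator_of_mem hu, norm_smul, norm_inv, Real.norm_of_nonneg (hw0 _),
        inv_mul_le_iff₀ (hw _), mul_comm]
      exact hgw _ hφu
    · simp [v, indicator_of_notMem hu]
  set z : ℝ → EN n := fun u => y t + ∫ s in t..u, v s
  have hz : ∀ s ∈ Icc t T, z (e s) = y s := fun s hs => by
    have hIoc : Ioc t s ⊆ Icc t T := fun x hx => ⟨hx.1.le, hx.2.trans hs.2⟩
    have hcov := setIntegral_comp_orderIso hwm hw0 hwi he v (measurableSet_Ioc (a := t) (b := e s))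
    rw [e.preimage_Ioc, hφt, e.symm_apply_apply,
      setIntegral_congr_fun measurableSet_Ioc fun x hx => by
        rw [hv_e x (hIoc hx), smul_inv_smul₀ (hw x).ne']] at hcov
    simp only [z]
    rw [hy s hs, intervalIntegral.integral_of_le (heI s hs).1, ← hcov,
      intervalIntegral.integral_of_le hs.1]
  refine ⟨z, v, memW1p_primitive hvm.aestronglyMeasurable hvr _,
    lipschitzWith_primitive hvm.aestronglyMeasurable hvr t _, by simp [z],
    by simpa [heT] using hz T (right_mem_Icc.2 htT), ?_⟩
  rw [Func, ← setLIntegral_comp_orderIso hwm hw0 hwi he _ measurableSet_Icc, hpre]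
  exact setLIntegral_congr_fun measurableSet_Icc fun s hs => by rw [hz s hs, hv_e s hs]

/-! ### The speed of the time change -/

/-- The clock of the reparametrization: it runs at speed `‖g‖` on `B` (so that the new velocity
is a unit vector there), at half speed on `G` (to give back the time gained on `B`) and at unit
speed elsewhere. -/
def speed {F : Type*} [Norm F] (g : ℝ → F) (B G : Set ℝ) (s : ℝ) : ℝ :=
  1 + B.indicator (fun s => ‖g s‖ - 1) s - G.indicator (fun _ => 2⁻¹) s

section Speed

variable {F : Type*} [NormedAddCommGroup F] {g : ℝ → F} {B G : Set ℝ} {s : ℝ}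

theorem speed_of_mem_left (hB : s ∈ B) (hG : s ∉ G) : speed g B G s = ‖g s‖ := by
  simp [speed, hB, hG]

theorem speed_of_mem_right (hB : s ∉ B) (hG : s ∈ G) : speed g B G s = 2⁻¹ := by
  simp [speed, hB, hG]; norm_num

theorem speed_of_notMem (hB : s ∉ B) (hG : s ∉ G) : speed g B G s = 1 := by
  simp [speed, hB, hG]

theorem half_le_speed (hBG : Disjoint B G) (hB1 : ∀ s ∈ B, 1 ≤ ‖g s‖) (s : ℝ) :
    2⁻¹ ≤ speed g B G s := by
  by_cases hB : s ∈ B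
  · rw [speed_of_mem_left hB (hBG.notMem_of_mem_left hB)]; linarith [hB1 s hB]
  by_cases hG : s ∈ G
  · rw [speed_of_mem_right hB hG]
  · rw [speed_of_notMem hB hG]; norm_num

theorem measurable_speed (hg : Measurable fun s => ‖g s‖) (hBm : MeasurableSet B)
    (hGm : MeasurableSet G) :
    Measurable (speed g B G) :=
  (measurable_const.add ((hg.sub measurable_const).indicator hBm)).sub
    (measurable_const.indicator hGm)

theorem intervalIntegrable_speed (hBm : MeasurableSet B) (hGm : MeasurableSet G)
    (hBi : IntegrableOn (fun s => ‖g s‖ - 1) B) (hG : volume G ≠ ⊤) (a b : ℝ) :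
    IntervalIntegrable (speed g B G) volume a b :=
  (intervalIntegrable_const.add (hBi.integrable_indicator hBm).intervalIntegrable).sub
    ((integrableOn_const hG).integrable_indicator hGm).intervalIntegrable

end Speed

theorem exists_orderIso_speed {F : Type*} [NormedAddCommGroup F] {g : ℝ → F} {B G : Set ℝ}
    {t T Δ : ℝ} (htT : t ≤ T) (hBm : MeasurableSet B)
    (hGm : MeasurableSet G) (hBI : B ⊆ Icc t T) (hGI : G ⊆ Icc t T) (hBG : Disjoint B G)
    (hB1 : ∀ s ∈ B, 1 ≤ ‖g s‖) (hBi : IntegrableOn (fun s => ‖g s‖ - 1) B)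
    (hΔ : ∫ s in B, (‖g s‖ - 1) = Δ) (hG : volume G = ENNReal.ofReal (2 * Δ)) :
    ∃ e : ℝ ≃o ℝ, (∀ x y, e y - e x = ∫ s in x..y, speed g B G s) ∧ e t = t ∧ e T = T ∧
      ∀ s ∈ Icc t T, |e s - s| ≤ Δ := by
  set f₁ : ℝ → ℝ := B.indicator fun s => ‖g s‖ - 1
  set f₂ : ℝ → ℝ := G.indicator fun _ => 2⁻¹
  have hGfin : volume G ≠ ⊤ := hG ▸ ofReal_ne_top
  have hf₁ : Integrable f₁ := hBi.integrable_indicator hBm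
  have hf₂ : Integrable f₂ := (integrableOn_const hGfin).integrable_indicator hGm
  have hf₁0 : ∀ s, 0 ≤ f₁ s :=
    indicator_nonneg fun s hs => sub_nonneg.2 (hB1 s hs)
  have hf₂0 : ∀ s, 0 ≤ f₂ s := indicator_nonneg fun _ _ => by norm_num
  have hf₁Δ : ∫ s, f₁ s = Δ := by rw [integral_indicator hBm, hΔ]
  have hΔ0 : 0 ≤ Δ := hf₁Δ ▸ integral_nonneg hf₁0
  have hf₂Δ : ∫ s, f₂ s = Δ := by
    rw [integral_indicator hGm, setIntegral_const, measureReal_def, hG,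
      ENNReal.toReal_ofReal (by linarith), smul_eq_mul]
    ring
  obtain ⟨e, het, he⟩ := exists_orderIso_sub_eq_integral (by norm_num : (0 : ℝ) < 2⁻¹)
    (half_le_speed hBG hB1) (intervalIntegrable_speed hBm hGm hBi hGfin) t
  have hsp : ∀ s, speed g B G s = 1 + (f₁ s - f₂ s) := fun s => by
    simp only [speed, f₁, f₂]; ring
  have hdev : ∀ x, e x - x = (∫ s in t..x, f₁ s) - ∫ s in t..x, f₂ s := fun x => by
    rw [show e x - x = (e x - e t) - (x - t) by rw [het]; ring, he]
    simp only [hsp]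
    rw [intervalIntegral.integral_add intervalIntegrable_const
        (hf₁.intervalIntegrable.sub hf₂.intervalIntegrable),
      intervalIntegral.integral_sub hf₁.intervalIntegrable hf₂.intervalIntegrable,
      intervalIntegral.integral_const, smul_eq_mul, mul_one]
    ring
  refine ⟨e, he, het, ?_, fun s hs => ?_⟩
  · have h₁ := intervalIntegral_eq_integral_of_support_subset htT
      (f := f₁) fun s hs => indicator_of_notMem (fun h => hs (hBI h)) _
    have h₂ := intervalIntegral_eq_integral_of_support_subset htT
      (f := f₂) fun s hs => indicator_of_notMem (fun h => hs (hGI h)) _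
    linarith [hdev T]
  · have h₁ := intervalIntegral_mem_Icc_integral hf₁ hf₁0 hs.1
    have h₂ := intervalIntegral_mem_Icc_integral hf₂ hf₂0 hs.1
    rw [hdev, abs_sub_le_iff]
    constructor <;> linarith [h₁.1, h₁.2, h₂.1, h₂.2]

/-! ### Energy of the reparametrized curve -/

theorem ConditionS.ae_le_add {n : ℕ} {t T p : ℝ} {Λ : ℝ → EN n → EN n → ℝ≥0∞}
    (hS : ConditionS t T p Λ) {K : ℝ} (hK : 0 ≤ K) :
    ∃ κ β : ℝ, ∃ γ : ℝ → ℝ, IntegrableOn γ (Icc t T) ∧ ∃ ε > 0,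
      ∀ᵐ s ∂volume.restrict (Icc t T), ∀ σ ∈ Icc t T, |σ - s| ≤ ε →
        ∀ z ∈ closedBall (0 : EN n) K, ∀ v, Λ s z v ≠ ⊤ →
          Λ σ z v ≤ Λ s z v + (ENNReal.ofReal κ * Λ s z v +
            ENNReal.ofReal (β * ‖v‖ ^ p + γ s)) * ENNReal.ofReal |σ - s| := by
  obtain ⟨κ, β, -, -, γ, hγ, ε, hε, hS⟩ := hS K hK
  refine ⟨κ, β, γ, hγ, ε, hε, ?_⟩
  filter_upwards [hS, ae_restrict_mem measurableSet_Icc] with s hs hsI σ hσ hσs z hz v hv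
  have hσ' : σ ∈ Icc (s - ε) (s + ε) ∩ Icc t T := ⟨⟨by linarith [(abs_le.1 hσs).1],
    by linarith [(abs_le.1 hσs).2]⟩, hσ⟩
  have hs' : s ∈ Icc (s - ε) (s + ε) ∩ Icc t T := ⟨⟨by linarith, by linarith⟩, hsI⟩
  exact tsub_le_iff_left.1 (le_sup_left.trans (hs s hs' σ hσ' z hz v hv.lt_top))

section Estimate

variable {n : ℕ} {Λ : ℝ → EN n → EN n → ℝ≥0∞} {Ψ : ℝ → EN n → ℝ≥0∞} {y g : ℝ → EN n}
  {B G : Set ℝ} {h : ℝ → ℝ≥0∞} {R Δ : ℝ} {MΨ M₁ M₂ : ℝ≥0}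

theorem ofReal_speed_mul_le {s σ : ℝ} (hBG : Disjoint B G) (hB1 : ∀ s ∈ B, 1 ≤ ‖g s‖)
    (hGR : ∀ s ∈ G, ‖g s‖ ≤ R) (hΨ : Ψ σ (y s) ≤ MΨ)
    (hM₁ : ∀ v : EN n, ‖v‖ ≤ 1 → Λ σ (y s) v ≤ M₁)
    (hM₂ : ∀ v : EN n, ‖v‖ ≤ 2 * R → Λ σ (y s) v ≤ M₂)
    (hσ : s ∉ B → s ∉ G → Λ σ (y s) (g s) ≤ Λ s (y s) (g s) + h s * ENNReal.ofReal Δ) :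
    ENNReal.ofReal (speed g B G s) * (Λ σ (y s) ((speed g B G s)⁻¹ • g s) * Ψ σ (y s)) ≤
      Λ s (y s) (g s) * Ψ σ (y s) + ENNReal.ofReal Δ * MΨ * h s +
        B.indicator (fun s => M₁ * MΨ * ENNReal.ofReal ‖g s‖) s +
          G.indicator (fun _ => (M₂ * MΨ : ℝ≥0∞)) s := by
  by_cases hB : s ∈ B
  · have hG : s ∉ G := hBG.notMem_of_mem_left hB
    have hg0 : ‖g s‖ ≠ 0 := (one_pos.trans_le (hB1 s hB)).ne'
    have hunit : ‖(speed g B G s)⁻¹ • g s‖ ≤ 1 := by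
      rw [speed_of_mem_left hB hG, norm_smul, norm_inv, norm_norm, inv_mul_cancel₀ hg0]
    rw [speed_of_mem_left hB hG] at hunit ⊢
    refine (mul_le_mul_right (mul_le_mul' (hM₁ _ hunit) hΨ) _).trans ?_
    rw [indicator_of_mem hB, indicator_of_notMem hG, add_zero, mul_comm]
    exact le_add_self
  by_cases hG : s ∈ G
  · have hnorm : ‖(speed g B G s)⁻¹ • g s‖ ≤ 2 * R := by
      rw [speed_of_mem_right hB hG, norm_smul, inv_inv, Real.norm_ofNat]
      linarith [hGR s hG]
    have hhalf : ENNReal.ofReal (speed g B G s) ≤ 1 := by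
      rw [speed_of_mem_right hB hG]; exact ENNReal.ofReal_le_one.2 (by norm_num)
    refine (mul_le_mul' hhalf (mul_le_mul' (hM₂ _ hnorm) hΨ)).trans ?_
    rw [one_mul, indicator_of_mem hG]
    exact le_add_self
  · rw [speed_of_notMem hB hG, ENNReal.ofReal_one, one_mul, inv_one, one_smul,
      indicator_of_notMem hB, indicator_of_notMem hG, add_zero, add_zero]
    calc _ ≤ (Λ s (y s) (g s) + h s * ENNReal.ofReal Δ) * Ψ σ (y s) :=
          mul_le_mul_left (hσ hB hG) _
      _ = Λ s (y s) (g s) * Ψ σ (y s) + h s * ENNReal.ofReal Δ * Ψ σ (y s) := add_mul _ _ _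
      _ ≤ Λ s (y s) (g s) * Ψ σ (y s) + h s * ENNReal.ofReal Δ * MΨ := by gcongr
      _ = _ := by ring

theorem setLIntegral_speed_le {t T ε : ℝ} {τ : ℝ → ℝ} (hBm : MeasurableSet B)
    (hGm : MeasurableSet G) (hBI : B ⊆ Icc t T) (hGI : G ⊆ Icc t T) (hBG : Disjoint B G)
    (hB1 : ∀ s ∈ B, 1 ≤ ‖g s‖) (hGR : ∀ s ∈ G, ‖g s‖ ≤ R) (hg : Measurable g)
    (hτ : ∀ s ∈ Icc t T, τ s ∈ Icc t T ∧ |τ s - s| ≤ Δ) (hΔε : Δ ≤ ε)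
    (hΨ : ∀ σ ∈ Icc t T, ∀ s ∈ Icc t T, Ψ σ (y s) ≤ MΨ)
    (hM₁ : ∀ σ ∈ Icc t T, ∀ s ∈ Icc t T, ∀ v : EN n, ‖v‖ ≤ 1 → Λ σ (y s) v ≤ M₁)
    (hM₂ : ∀ σ ∈ Icc t T, ∀ s ∈ Icc t T, ∀ v : EN n, ‖v‖ ≤ 2 * R → Λ σ (y s) v ≤ M₂)
    (hΛS : ∀ᵐ s ∂volume.restrict (Icc t T), ∀ σ ∈ Icc t T, |σ - s| ≤ ε →
      Λ σ (y s) (g s) ≤ Λ s (y s) (g s) + h s * ENNReal.ofReal |σ - s|)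
    (hh : AEMeasurable h (volume.restrict (Icc t T))) :
    ∫⁻ s in Icc t T, ENNReal.ofReal (speed g B G s) *
        (Λ (τ s) (y s) ((speed g B G s)⁻¹ • g s) * Ψ (τ s) (y s)) ≤
      (∫⁻ s in Icc t T, Λ s (y s) (g s) * Ψ (τ s) (y s)) +
        ENNReal.ofReal Δ * MΨ * (∫⁻ s in Icc t T, h s) +
          M₁ * MΨ * (∫⁻ s in B, ENNReal.ofReal ‖g s‖) + M₂ * MΨ * volume G := by
  refine (lintegral_mono_ae (g := fun s => Λ s (y s) (g s) * Ψ (τ s) (y s) +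
      ENNReal.ofReal Δ * MΨ * h s + B.indicator (fun s => M₁ * MΨ * ENNReal.ofReal ‖g s‖) s +
        G.indicator (fun _ => (M₂ * MΨ : ℝ≥0∞)) s) ?_).trans (le_of_eq ?_)
  · filter_upwards [hΛS, ae_restrict_mem measurableSet_Icc] with s hsS hs
    obtain ⟨hτI, hτs⟩ := hτ s hs
    exact ofReal_speed_mul_le hBG hB1 hGR (hΨ _ hτI s hs) (hM₁ _ hτI s hs) (hM₂ _ hτI s hs)
      fun _ _ => (hsS _ hτI (hτs.trans hΔε)).trans
        (add_le_add_right (mul_le_mul_right (ENNReal.ofReal_le_ofReal hτs) _) _)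
  · have hB' : Measurable (B.indicator fun s => (M₁ * MΨ : ℝ≥0∞) * ENNReal.ofReal ‖g s‖) :=
      (hg.norm.ennreal_ofReal.const_mul _).indicator hBm
    rw [lintegral_add_right' _ (measurable_const.indicator hGm).aemeasurable,
      lintegral_add_right' _ hB'.aemeasurable, lintegral_add_right' _ (hh.const_mul _),
      lintegral_const_mul' _ _ (by finiteness), lintegral_indicator hBm,
      Measure.restrict_restrict hBm, inter_eq_left.2 hBI,
      lintegral_const_mul' _ _ (by finiteness), lintegral_indicator_const hGm,
      Measure.restrict_apply hGm, inter_eq_left.2 hGI]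

end Estimate

theorem exists_lipschitz_competitor {n : ℕ} {t T p : ℝ} {Λ : ℝ → EN n → EN n → ℝ≥0∞}
    {Ψ : ℝ → EN n → ℝ≥0∞} {y g : ℝ → EN n} {h : ℝ → ℝ≥0∞} {R L Δ ε : ℝ} {MΨ M₁ M₂ : ℝ≥0}
    (htT : t ≤ T) (hy : ∀ x ∈ Icc t T, y x = y t + ∫ s in t..x, g s) (hg : Measurable g)
    (hgi : IntegrableOn g (Icc t T))
    (hΨ : ∀ σ ∈ Icc t T, ∀ s ∈ Icc t T, Ψ σ (y s) ≤ MΨ)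
    (hM₁ : ∀ σ ∈ Icc t T, ∀ s ∈ Icc t T, ∀ v : EN n, ‖v‖ ≤ 1 → Λ σ (y s) v ≤ M₁)
    (hM₂ : ∀ σ ∈ Icc t T, ∀ s ∈ Icc t T, ∀ v : EN n, ‖v‖ ≤ 2 * R → Λ σ (y s) v ≤ M₂)
    (hΛS : ∀ᵐ s ∂volume.restrict (Icc t T), ∀ σ ∈ Icc t T, |σ - s| ≤ ε →
      Λ σ (y s) (g s) ≤ Λ s (y s) (g s) + h s * ENNReal.ofReal |σ - s|)
    (hh : AEMeasurable h (volume.restrict (Icc t T)))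
    (hR : 0 ≤ R) (hRL : R ≤ L) (hL : 1 ≤ L)
    (hΔ : ∫ s in Icc t T ∩ {s | L < ‖g s‖}, (‖g s‖ - 1) = Δ)
    (h2Δ : ENNReal.ofReal (2 * Δ) ≤ volume (Icc t T ∩ {s | ‖g s‖ ≤ R})) (hΔε : Δ ≤ ε) :
    ∃ τ : ℝ → ℝ, Measurable τ ∧ (∀ s ∈ Icc t T, τ s ∈ Icc t T ∧ |τ s - s| ≤ Δ) ∧
      ∃ z z' : ℝ → EN n, MemW1p t T p z z' ∧ (∃ C : ℝ≥0, LipschitzOnWith C z (Icc t T)) ∧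
        z t = y t ∧ z T = y T ∧
        Func t T Λ Ψ z z' ≤ (∫⁻ s in Icc t T, Λ s (y s) (g s) * Ψ (τ s) (y s)) +
          ENNReal.ofReal Δ * MΨ * (∫⁻ s in Icc t T, h s) +
            M₁ * MΨ * ENNReal.ofReal (∫ s in Icc t T ∩ {s | L < ‖g s‖}, ‖g s‖) +
              M₂ * MΨ * ENNReal.ofReal (2 * Δ) := by
  set B := Icc t T ∩ {s | L < ‖g s‖}
  have hBm : MeasurableSet B := measurableSet_Icc.inter (measurableSet_lt measurable_const hg.norm)
  have hB1 : ∀ s ∈ B, 1 ≤ ‖g s‖ := fun s hs => hL.trans hs.2.le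
  have hBi : IntegrableOn (fun s => ‖g s‖ - 1) B :=
    IntegrableOn.mono_set (hgi.norm.sub (integrableOn_const measure_Icc_lt_top.ne))
      inter_subset_left
  have hΔ0 : 0 ≤ Δ := hΔ ▸ setIntegral_nonneg hBm fun s hs => sub_nonneg.2 (hB1 s hs)
  obtain ⟨G, hGS, hGm, hGvol⟩ := exists_subset_volume_eq htT
    (measurableSet_Icc.inter (measurableSet_le hg.norm measurable_const)) inter_subset_left
    (by positivity) h2Δ
  have hGI : G ⊆ Icc t T := hGS.trans inter_subset_left
  have hGR : ∀ s ∈ G, ‖g s‖ ≤ R := fun s hs => (hGS hs).2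
  have hBG : Disjoint B G :=
    disjoint_left.2 fun s hB hG => (hGR s hG).not_gt (hRL.trans_lt hB.2)
  obtain ⟨e, he, het, heT, hes⟩ := exists_orderIso_speed htT hBm hGm inter_subset_left hGI hBG
    hB1 hBi hΔ hGvol
  have hgw : ∀ s ∈ Icc t T, ‖g s‖ ≤ (L + 2 * R).toNNReal * speed g B G s := fun s hs => by
    rw [Real.coe_toNNReal _ (by linarith)]
    by_cases hB : s ∈ B
    · rw [speed_of_mem_left hB (hBG.notMem_of_mem_left hB)]
      nlinarith [norm_nonneg (g s)]
    by_cases hG : s ∈ G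
    · rw [speed_of_mem_right hB hG]
      linarith [hGR s hG]
    · rw [speed_of_notMem hB hG, mul_one]
      have hgL : ‖g s‖ ≤ L := not_lt.1 fun h => hB ⟨hs, h⟩
      linarith
  obtain ⟨z, z', hz, hzlip, hzt, hzT, hzF⟩ :=
    exists_lipschitz_reparametrization (Λ := Λ) (Ψ := Ψ) (p := p) htT hy hg
      (measurable_speed hg.norm hBm hGm)
      (fun x => (by norm_num : (0 : ℝ) < 2⁻¹).trans_le (half_le_speed hBG hB1 x))
      (intervalIntegrable_speed hBm hGm hBi (hGvol ▸ ofReal_ne_top)) he het heT hgw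
  have hτ : ∀ s ∈ Icc t T, e s ∈ Icc t T ∧ |e s - s| ≤ Δ := fun s hs =>
    ⟨⟨het ▸ e.monotone hs.1, heT ▸ e.monotone hs.2⟩, hes s hs⟩
  refine ⟨e, e.monotone.measurable, hτ, z, z', hz, ⟨_, hzlip.lipschitzOnWith⟩, hzt, hzT, ?_⟩
  rw [hzF, ← hGvol]
  refine (setLIntegral_speed_le hBm hGm inter_subset_left hGI hBG hB1 hGR hg hτ hΔε hΨ hM₁ hM₂
    hΛS hh).trans_eq ?_
  rw [ofReal_integral_eq_lintegral_ofReal (IntegrableOn.mono_set hgi.norm inter_subset_left)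
    (ae_of_all _ fun _ => norm_nonneg _)]

/-! ### Passage to the limit -/

theorem tendsto_setLIntegral_mul_comp {n : ℕ} {t T : ℝ} {Ψ : ℝ → EN n → ℝ≥0∞}
    (hΨm : Measurable fun q : ℝ × EN n => Ψ q.1 q.2) {y : ℝ → EN n} {f : ℝ → ℝ≥0∞}
    {τ : ℕ → ℝ → ℝ} {Δ : ℕ → ℝ} {MΨ : ℝ≥0} (hy : AEMeasurable y (volume.restrict (Icc t T)))
    (hf : AEMeasurable f (volume.restrict (Icc t T))) (hfi : ∫⁻ s in Icc t T, f s ≠ ⊤)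
    (hf_top : ∀ s ∈ Icc t T, f s ≠ ⊤) (hΨ : ∀ σ ∈ Icc t T, ∀ s ∈ Icc t T, Ψ σ (y s) ≤ MΨ)
    (hΨc : ∀ s ∈ Icc t T, ContinuousWithinAt (fun σ => Ψ σ (y s)) (Icc t T) s)
    (hτ : ∀ᶠ k in atTop, Measurable (τ k) ∧ ∀ s ∈ Icc t T, τ k s ∈ Icc t T ∧ |τ k s - s| ≤ Δ k)
    (hΔ : Tendsto Δ atTop (𝓝 0)) :
    Tendsto (fun k => ∫⁻ s in Icc t T, f s * Ψ (τ k s) (y s)) atTop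
      (𝓝 (∫⁻ s in Icc t T, f s * Ψ s (y s))) := by
  refine tendsto_lintegral_filter_of_dominated_convergence' (fun s => f s * MΨ)
    (hτ.mono fun k hk => hf.mul (hΨm.comp_aemeasurable (hk.1.aemeasurable.prodMk hy)))
    (hτ.mono fun k hk => ?_) (by rw [lintegral_mul_const' _ _ coe_ne_top]; finiteness) ?_
  · filter_upwards [ae_restrict_mem measurableSet_Icc] with s hs
    exact mul_le_mul_right (hΨ _ (hk.2 s hs).1 s hs) _
  · filter_upwards [ae_restrict_mem measurableSet_Icc] with s hs
    have hτs : Tendsto (fun k => τ k s) atTop (𝓝[Icc t T] s) := by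
      refine tendsto_nhdsWithin_iff.2 ⟨?_, hτ.mono fun k hk => (hk.2 s hs).1⟩
      refine tendsto_iff_norm_sub_tendsto_zero.2 (squeeze_zero' (Eventually.of_forall
        fun _ => norm_nonneg _) (hτ.mono fun k hk => ?_) hΔ)
      exact (Real.norm_eq_abs _).trans_le (hk.2 s hs).2
    exact ENNReal.Tendsto.const_mul ((hΨc s hs).tendsto.comp hτs) (Or.inr (hf_top s hs))

theorem setLIntegral_ne_top_of_func_ne_top {n : ℕ} {t T m : ℝ} {Λ : ℝ → EN n → EN n → ℝ≥0∞}
    {Ψ : ℝ → EN n → ℝ≥0∞} {y g : ℝ → EN n} (hm : 0 < m)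
    (hmΨ : ∀ s ∈ Icc t T, ENNReal.ofReal m ≤ Ψ s (y s)) (hc : Func t T Λ Ψ y g ≠ ⊤) :
    ∫⁻ s in Icc t T, Λ s (y s) (g s) ≠ ⊤ := by
  have hm' : ENNReal.ofReal m ≠ 0 := (ENNReal.ofReal_pos.2 hm).ne'
  refine ne_top_of_le_ne_top (ENNReal.mul_ne_top hc (ENNReal.inv_ne_top.2 hm')) ?_
  rw [Func, ← lintegral_mul_const' _ _ (ENNReal.inv_ne_top.2 hm')]
  refine setLIntegral_mono' measurableSet_Icc fun s hs => ?_
  have h1 : 1 ≤ Ψ s (y s) / ENNReal.ofReal m :=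
    (ENNReal.le_div_iff_mul_le (Or.inl hm') (Or.inl ofReal_ne_top)).2
      (by rw [one_mul]; exact hmΨ s hs)
  calc Λ s (y s) (g s) = Λ s (y s) (g s) * 1 := (mul_one _).symm
    _ ≤ Λ s (y s) (g s) * (Ψ s (y s) / ENNReal.ofReal m) := by gcongr
    _ = Λ s (y s) (g s) * Ψ s (y s) * (ENNReal.ofReal m)⁻¹ := by rw [div_eq_mul_inv, mul_assoc]

theorem sInf_lipschitz_le_func_of_bounds {n : ℕ} {t T p : ℝ} {Λ : ℝ → EN n → EN n → ℝ≥0∞}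
    {Ψ : ℝ → EN n → ℝ≥0∞} (hΨm : Measurable fun q : ℝ × EN n => Ψ q.1 q.2)
    {y g : ℝ → EN n} {h : ℝ → ℝ≥0∞} {R ε : ℝ} {MΨ M₁ M₂ : ℝ≥0} (htT : t ≤ T)
    (hy : ∀ x ∈ Icc t T, y x = y t + ∫ s in t..x, g s)
    (hyae : AEMeasurable y (volume.restrict (Icc t T)))
    (hg : Measurable g) (hgi : IntegrableOn g (Icc t T))
    (hΨ : ∀ σ ∈ Icc t T, ∀ s ∈ Icc t T, Ψ σ (y s) ≤ MΨ)
    (hΨc : ∀ s ∈ Icc t T, ContinuousWithinAt (fun σ => Ψ σ (y s)) (Icc t T) s)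
    (hM₁ : ∀ σ ∈ Icc t T, ∀ s ∈ Icc t T, ∀ v : EN n, ‖v‖ ≤ 1 → Λ σ (y s) v ≤ M₁)
    (hM₂ : ∀ σ ∈ Icc t T, ∀ s ∈ Icc t T, ∀ v : EN n, ‖v‖ ≤ 2 * R → Λ σ (y s) v ≤ M₂)
    (hR : 1 ≤ R) (hSR : 0 < volume (Icc t T ∩ {s | ‖g s‖ ≤ R}))
    (hf : AEMeasurable (fun s => Λ s (y s) (g s)) (volume.restrict (Icc t T)))
    (hfi : ∫⁻ s in Icc t T, Λ s (y s) (g s) ≠ ⊤) (hf_top : ∀ s ∈ Icc t T, Λ s (y s) (g s) ≠ ⊤)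
    (hε : 0 < ε) (hΛS : ∀ᵐ s ∂volume.restrict (Icc t T), ∀ σ ∈ Icc t T, |σ - s| ≤ ε →
      Λ σ (y s) (g s) ≤ Λ s (y s) (g s) + h s * ENNReal.ofReal |σ - s|)
    (hh : AEMeasurable h (volume.restrict (Icc t T))) (hhi : ∫⁻ s in Icc t T, h s ≠ ⊤) :
    sInf {c : ℝ≥0∞ | ∃ z z' : ℝ → EN n, MemW1p t T p z z' ∧
        (∃ C : ℝ≥0, LipschitzOnWith C z (Icc t T)) ∧ z t = y t ∧ z T = y T ∧
        c = Func t T Λ Ψ z z'} ≤ Func t T Λ Ψ y g := by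
  set I := Icc t T
  set Δ : ℕ → ℝ := fun k => ∫ s in I ∩ {s | R + k < ‖g s‖}, (‖g s‖ - 1)
  set η : ℕ → ℝ := fun k => ∫ s in I ∩ {s | R + k < ‖g s‖}, ‖g s‖
  have hΔ : Tendsto Δ atTop (𝓝 0) := tendsto_setIntegral_inter_lt measurableSet_Icc hg.norm
    (hgi.norm.sub (integrableOn_const measure_Icc_lt_top.ne)) R
  have hη : Tendsto η atTop (𝓝 0) :=
    tendsto_setIntegral_inter_lt measurableSet_Icc hg.norm hgi.norm R
  have hsmall : ∀ᶠ k in atTop,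
      ENNReal.ofReal (2 * Δ k) ≤ volume (I ∩ {s | ‖g s‖ ≤ R}) ∧ Δ k ≤ ε := by
    refine (Tendsto.eventually_lt_const ?_ (ENNReal.tendsto_ofReal (hΔ.const_mul 2))).mono
      (fun k hk => hk.le) |>.and (hΔ.eventually (ge_mem_nhds hε))
    simpa using hSR
  obtain ⟨τ, hτ⟩ := (hsmall.mono fun k hk => exists_lipschitz_competitor (p := p) htT hy hg hgi
    hΨ hM₁ hM₂ hΛS hh (by linarith) (le_add_of_nonneg_right k.cast_nonneg)
    (hR.trans (le_add_of_nonneg_right k.cast_nonneg)) rfl hk.1 hk.2).choice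
  have hA := tendsto_setLIntegral_mul_comp hΨm hyae hf hfi hf_top hΨ hΨc
    (hτ.mono fun k hk => ⟨hk.1, hk.2.1⟩) hΔ
  have hlim : Tendsto (fun k => (∫⁻ s in I, Λ s (y s) (g s) * Ψ (τ k s) (y s)) +
      ENNReal.ofReal (Δ k) * MΨ * (∫⁻ s in I, h s) + M₁ * MΨ * ENNReal.ofReal (η k) +
        M₂ * MΨ * ENNReal.ofReal (2 * Δ k)) atTop (𝓝 (Func t T Λ Ψ y g +
          ENNReal.ofReal 0 * MΨ * (∫⁻ s in I, h s) + M₁ * MΨ * ENNReal.ofReal 0 +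
            M₂ * MΨ * ENNReal.ofReal (2 * 0))) := by
    refine ((hA.add ?_).add ?_).add ?_
    · exact ENNReal.Tendsto.mul_const (ENNReal.Tendsto.mul_const (ENNReal.tendsto_ofReal hΔ)
        (Or.inr coe_ne_top)) (Or.inr hhi)
    · exact ENNReal.Tendsto.const_mul (ENNReal.tendsto_ofReal hη) (Or.inr (by finiteness))
    · exact ENNReal.Tendsto.const_mul (ENNReal.tendsto_ofReal (hΔ.const_mul 2))
        (Or.inr (by finiteness))
  simp only [mul_zero, ENNReal.ofReal_zero, zero_mul, add_zero] at hlim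
  refine ge_of_tendsto hlim (hτ.mono fun k hk => ?_)
  obtain ⟨-, -, z, z', hz, hzlip, hzt, hzT, hzF⟩ := hk
  refine le_trans (sInf_le ?_) hzF
  exact ⟨z, z', hz, hzlip, hzt, hzT, rfl⟩

theorem sInf_lipschitz_le_func {n : ℕ} {t T p : ℝ} (ht : t < T) (hp : 1 ≤ p)
    {Λ : ℝ → EN n → EN n → ℝ≥0∞} {Ψ : ℝ → EN n → ℝ≥0∞}
    (hΛm : Measurable fun q : ℝ × EN n × EN n => Λ q.1 q.2.1 q.2.2)
    (hΨm : Measurable fun q : ℝ × EN n => Ψ q.1 q.2)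
    (hS : ConditionS t T p Λ)
    (hΛreal : ∀ s ∈ Icc t T, ∀ z v : EN n, Λ s z v ≠ ⊤)
    (hΨbd : ∀ K : ℝ, 0 < K → ∃ M : ℝ≥0, ∀ s ∈ Icc t T, ∀ z ∈ closedBall (0 : EN n) K, Ψ s z ≤ M)
    (hΨc : ∀ K : ℝ, 0 < K → ∀ z ∈ closedBall (0 : EN n) K,
      ContinuousOn (fun s => Ψ s z) (Icc t T))
    (hΨpos : ∀ K : ℝ, 0 < K → ∃ m : ℝ, 0 < m ∧ ∀ s ∈ Icc t T,
      ∀ z ∈ closedBall (0 : EN n) K, ENNReal.ofReal m ≤ Ψ s z)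
    (hΛbd : ∀ K : ℝ, 0 < K → ∀ r : ℝ, 0 < r → ∃ M : ℝ≥0, ∀ s ∈ Icc t T,
      ∀ z ∈ closedBall (0 : EN n) K, ∀ v ∈ closedBall (0 : EN n) r, Λ s z v ≤ M)
    {y g : ℝ → EN n} (hy : MemW1p t T p y g) (hg : Measurable g) :
    sInf {c : ℝ≥0∞ | ∃ z z' : ℝ → EN n, MemW1p t T p z z' ∧
        (∃ C : ℝ≥0, LipschitzOnWith C z (Icc t T)) ∧ z t = y t ∧ z T = y T ∧
        c = Func t T Λ Ψ z z'} ≤ Func t T Λ Ψ y g := by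
  obtain hc | hc := eq_or_ne (Func t T Λ Ψ y g) ⊤
  · exact hc ▸ le_top
  have hyc := hy.continuousOn ht.le
  obtain ⟨K₀, hK₀⟩ := isCompact_Icc.exists_bound_of_continuousOn hyc
  have hK : 0 < max K₀ 1 := one_pos.trans_le (le_max_right _ _)
  have hyK : ∀ s ∈ Icc t T, y s ∈ closedBall (0 : EN n) (max K₀ 1) := fun s hs =>
    mem_closedBall_zero_iff.2 ((hK₀ s hs).trans (le_max_left _ _))
  obtain ⟨MΨ, hMΨ⟩ := hΨbd _ hK
  obtain ⟨m, hm, hmΨ⟩ := hΨpos _ hK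
  obtain ⟨M₁, hM₁⟩ := hΛbd _ hK 1 one_pos
  obtain ⟨R, hR, hSR⟩ := exists_volume_inter_norm_le_pos ht g
  obtain ⟨M₂, hM₂⟩ := hΛbd _ hK (2 * R) (by positivity)
  obtain ⟨κ, β, γ, hγ, ε, hε, hΛS⟩ := hS.ae_le_add hK.le
  have hyae : AEMeasurable y (volume.restrict (Icc t T)) := hyc.aemeasurable measurableSet_Icc
  have hf : AEMeasurable (fun s => Λ s (y s) (g s)) (volume.restrict (Icc t T)) :=
    hΛm.comp_aemeasurable (aemeasurable_id.prodMk (hyae.prodMk hg.aemeasurable))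
  have hfi := setLIntegral_ne_top_of_func_ne_top hm (fun s hs => hmΨ s hs _ (hyK s hs)) hc
  have hβγ : IntegrableOn (fun s => β * ‖g s‖ ^ p + γ s) (Icc t T) := by
    have := hy.2.2.2.integrable_norm_rpow (by simp; linarith) ofReal_ne_top
    rw [ENNReal.toReal_ofReal (by linarith)] at this
    exact (this.const_mul β).add hγ
  refine sInf_lipschitz_le_func_of_bounds (h := fun s => ENNReal.ofReal κ * Λ s (y s) (g s) +
      ENNReal.ofReal (β * ‖g s‖ ^ p + γ s)) hΨm ht.le hy.2.1 hyae hg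
    (hy.2.2.2.integrable (by simpa using hp)) (fun σ hσ s hs => hMΨ σ hσ _ (hyK s hs))
    (fun s hs => hΨc _ hK _ (hyK s hs) s hs)
    (fun σ hσ s hs v hv => hM₁ σ hσ _ (hyK s hs) v (mem_closedBall_zero_iff.2 hv))
    (fun σ hσ s hs v hv => hM₂ σ hσ _ (hyK s hs) v (mem_closedBall_zero_iff.2 hv)) hR hSR hf hfi
    (fun s hs => hΛreal s hs _ _) hε ?_ ((hf.const_mul _).add hβγ.aemeasurable.ennreal_ofReal) ?_
  · filter_upwards [hΛS, ae_restrict_mem measurableSet_Icc] with s hs hsI σ hσ hσs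
    exact hs σ hσ hσs _ (hyK s hsI) _ (hΛreal s hsI _ _)
  · rw [lintegral_add_left' (hf.const_mul _), lintegral_const_mul' _ _ ofReal_ne_top]
    exact ENNReal.add_ne_top.2 ⟨by finiteness, hβγ.lintegral_lt_top.ne⟩

theorem nonoccurrence_phenomenon_two_endpoints_general {n : ℕ} (t T : ℝ) (ht : t < T)
    (p : ℝ) (hp : 1 ≤ p)
    (Λ : ℝ → EN n → EN n → ℝ≥0∞) (Ψ : ℝ → EN n → ℝ≥0∞)
    (hΛm : Measurable fun q : ℝ × EN n × EN n => Λ q.1 q.2.1 q.2.2)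
    (hΨm : Measurable fun q : ℝ × EN n => Ψ q.1 q.2)
    (hS : ConditionS t T p Λ)
    -- `Λ` is real valued
    (hΛreal : ∀ s ∈ Set.Icc t T, ∀ z v : EN n, Λ s z v ≠ ⊤)
    -- (B_Ψ): for every `K > 0`, `Ψ` is bounded on `I × B_K`
    (hΨbd : ∀ K : ℝ, 0 < K → ∃ M : ℝ≥0, ∀ s ∈ Set.Icc t T,
      ∀ z ∈ Metric.closedBall (0 : EN n) K, Ψ s z ≤ M)
    -- (C_Ψ): for every `K > 0` and `z ∈ B_K`, `Ψ(·,z)` is continuous on `I`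
    (hΨc : ∀ K : ℝ, 0 < K → ∀ z ∈ Metric.closedBall (0 : EN n) K,
      ContinuousOn (fun s => Ψ s z) (Set.Icc t T))
    -- (P_Ψ): for every `K > 0` there is `m_{K,Ψ} > 0` with `Ψ ≥ m_{K,Ψ}` on `I × B_K`
    (hΨpos : ∀ K : ℝ, 0 < K → ∃ m : ℝ, 0 < m ∧ ∀ s ∈ Set.Icc t T,
      ∀ z ∈ Metric.closedBall (0 : EN n) K, ENNReal.ofReal m ≤ Ψ s z)
    -- (U_Λ): for every `K > 0` and `r > 0`, `Λ` is bounded on `I × B_K × B_r`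
    (hΛbd : ∀ K : ℝ, 0 < K → ∀ r : ℝ, 0 < r → ∃ M : ℝ≥0, ∀ s ∈ Set.Icc t T,
      ∀ z ∈ Metric.closedBall (0 : EN n) K, ∀ v ∈ Metric.closedBall (0 : EN n) r,
        Λ s z v ≤ M)
    (X Y : EN n) :
    sInf {c : ℝ≥0∞ | ∃ y y' : ℝ → EN n, MemW1p t T p y y' ∧ y t = X ∧ y T = Y ∧
        c = Func t T Λ Ψ y y'} =
    sInf {c : ℝ≥0∞ | ∃ y y' : ℝ → EN n, MemW1p t T p y y' ∧
        (∃ C : ℝ≥0, LipschitzOnWith C y (Set.Icc t T)) ∧ y t = X ∧ y T = Y ∧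
        c = Func t T Λ Ψ y y'} := by
  refine le_antisymm (sInf_le_sInf fun c ⟨y, y', hy, _, hyt, hyT, hc⟩ => ⟨y, y', hy, hyt, hyT, hc⟩)
    (le_sInf ?_)
  rintro c ⟨y, y', hy, rfl, rfl, rfl⟩
  have hy' := hy.2.2.2.aestronglyMeasurable
  have hF : Func t T Λ Ψ y y' = Func t T Λ Ψ y (hy'.mk y') :=
    lintegral_congr_ae (hy'.ae_eq_mk.mono fun s hs => by simp only [hs])
  rw [hF]
  exact sInf_lipschitz_le_func ht hp hΛm hΨm hS hΛreal hΨbd hΨc hΨpos hΛbd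
    (hy.congr_ae ht.le hy'.ae_eq_mk) hy'.stronglyMeasurable_mk.measurable

/-- **Corollary 3.2, Claim 2** (non-occurrence of the Lavrentiev phenomenon for the two
end point problem ($\mathcal P_{X,Y}$), real valued case). -/
theorem nonoccurrence_phenomenon_two_endpoints {n : ℕ} (hn : 1 ≤ n) (t T : ℝ) (ht : t < T)
    (p : ℝ) (hp : 1 ≤ p)
    (Λ : ℝ → EN n → EN n → ℝ≥0∞) (Ψ : ℝ → EN n → ℝ≥0∞)
    (hΛm : Measurable fun q : ℝ × EN n × EN n => Λ q.1 q.2.1 q.2.2)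
    (hΨm : Measurable fun q : ℝ × EN n => Ψ q.1 q.2)
    (hS : ConditionS t T p Λ)
    -- `Λ` is real valued
    (hΛreal : ∀ s ∈ Set.Icc t T, ∀ z v : EN n, Λ s z v ≠ ⊤)
    -- (B_Ψ): for every `K > 0`, `Ψ` is bounded on `I × B_K`
    (hΨbd : ∀ K : ℝ, 0 < K → ∃ M : ℝ≥0, ∀ s ∈ Set.Icc t T,
      ∀ z ∈ Metric.closedBall (0 : EN n) K, Ψ s z ≤ M)
    -- (C_Ψ): for every `K > 0` and `z ∈ B_K`, `Ψ(·,z)` is continuous on `I`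
    (hΨc : ∀ K : ℝ, 0 < K → ∀ z ∈ Metric.closedBall (0 : EN n) K,
      ContinuousOn (fun s => Ψ s z) (Set.Icc t T))
    -- (P_Ψ): for every `K > 0` there is `m_{K,Ψ} > 0` with `Ψ ≥ m_{K,Ψ}` on `I × B_K`
    (hΨpos : ∀ K : ℝ, 0 < K → ∃ m : ℝ, 0 < m ∧ ∀ s ∈ Set.Icc t T,
      ∀ z ∈ Metric.closedBall (0 : EN n) K, ENNReal.ofReal m ≤ Ψ s z)
    -- (U_Λ): for every `K > 0` and `r > 0`, `Λ` is bounded on `I × B_K × B_r`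
    (hΛbd : ∀ K : ℝ, 0 < K → ∀ r : ℝ, 0 < r → ∃ M : ℝ≥0, ∀ s ∈ Set.Icc t T,
      ∀ z ∈ Metric.closedBall (0 : EN n) K, ∀ v ∈ Metric.closedBall (0 : EN n) r,
        Λ s z v ≤ M)
    (X Y : EN n) :
    sInf {c : ℝ≥0∞ | ∃ y y' : ℝ → EN n, MemW1p t T p y y' ∧ y t = X ∧ y T = Y ∧
        c = Func t T Λ Ψ y y'} =
    sInf {c : ℝ≥0∞ | ∃ y y' : ℝ → EN n, MemW1p t T p y y' ∧
        (∃ C : ℝ≥0, LipschitzOnWith C y (Set.Icc t T)) ∧ y t = X ∧ y T = Y ∧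
        c = Func t T Λ Ψ y y'} :=
  nonoccurrence_phenomenon_two_endpoints_general t T ht p hp Λ Ψ hΛm hΨm hS hΛreal hΨbd hΨc hΨpos
    hΛbd X Y
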